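/- arXiv:2408.13795 — 6 statements merged into one kernel-verified Lean document; each statement's English description precedes it below -/
import Mathlib

section
/- Let f : ℝⁿ → ℝ ∪ {∞} be lower semicontinuous and prox-regular at x̄ for x̄* ∈ ∂f(x̄) with parameter values r ≥ 0 and ε > 0. If a sequence (x_k, x_k*) lies in the f-attentive ε-localization of ∂f around (x̄, x̄*) (i.e., x_k* ∈ ∂f(x_k), f(x_k) < f(x̄)+ε, x_k ∈ B_ε(x̄), x_k* ∈ B_ε(x̄*)) and converges to (x̂, x̂*) ∈ B_ε(x̄) × B_ε(x̄*), then f(x̂) = lim_k f(x_k) is finite and x̂* ∈ ∂f(x̂); in particular the convergence is f-attentive. -/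
open scoped RealInnerProductSpace
open Filter Topology Metric Matrix

noncomputable section

abbrev En (n : ℕ) := EuclideanSpace ℝ (Fin n)

variable {n : ℕ}

/-- The regular (Fréchet) subdifferential of an extended-real-valued function. -/
def FSubdiff (f : En n → EReal) (x : En n) : Set (En n) :=
  {v | ∀ c : ℝ, 0 < c → ∃ δ > (0:ℝ), ∀ y ∈ ball x δ,
    f x + ((⟪v, y - x⟫ - c * ‖y - x‖ : ℝ) : EReal) ≤ f y}

/-- The limiting (Mordukhovich) subdifferential, via f-attentive convergence. -/
def LSubdiff (f : En n → EReal) (x : En n) : Set (En n) :=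
  {v | ∃ xs vs : ℕ → En n, (∀ k, vs k ∈ FSubdiff f (xs k)) ∧
    Tendsto xs atTop (𝓝 x) ∧ Tendsto (fun k => f (xs k)) atTop (𝓝 (f x)) ∧
    Tendsto vs atTop (𝓝 v)}

/-- The graph of the f-attentive ε-localization of the subdifferential around (x̄, x̄*). -/
def GphT (f : En n → EReal) (xb xbs : En n) (ε : ℝ) : Set (En n × En n) :=
  {p | p.2 ∈ LSubdiff f p.1 ∧ f p.1 < f xb + (ε : EReal) ∧
       p.1 ∈ ball xb ε ∧ p.2 ∈ ball xbs ε}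

/-- Prox-regularity of f at x̄ for x̄* with parameters r ≥ 0 and ε > 0. -/
def ProxReg (f : En n → EReal) (xb xbs : En n) (r ε : ℝ) : Prop :=
  (∃ a : ℝ, f xb = (a : EReal)) ∧ xbs ∈ LSubdiff f xb ∧ 0 ≤ r ∧ 0 < ε ∧
  ∀ x' ∈ ball xb ε, ∀ p ∈ GphT f xb xbs ε,
    f p.1 + ((⟪p.2, x' - p.1⟫ - r / 2 * ‖x' - p.1‖ ^ 2 : ℝ) : EReal) ≤ f x'

theorem stmt0 (f : En n → EReal) (xb xbs : En n) (r ε : ℝ)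
    (hlsc : LowerSemicontinuous f) (hpr : ProxReg f xb xbs r ε)
    (xs vs : ℕ → En n) (hmem : ∀ k, (xs k, vs k) ∈ GphT f xb xbs ε)
    (xh xhs : En n) (hx : Tendsto xs atTop (𝓝 xh)) (hv : Tendsto vs atTop (𝓝 xhs))
    (hxb : xh ∈ ball xb ε) (hvb : xhs ∈ ball xbs ε) :
    (∃ a : ℝ, f xh = (a : EReal)) ∧
    Tendsto (fun k => f (xs k)) atTop (𝓝 (f xh)) ∧
    xhs ∈ LSubdiff f xh := by
  obtain ⟨⟨a, ha⟩, hxbsmem, hr, hε, hP⟩ := hpr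
  -- (xb, xbs) belongs to the localized graph
  have hbmem : (xb, xbs) ∈ GphT f xb xbs ε := by
    refine ⟨hxbsmem, ?_, mem_ball_self hε, mem_ball_self hε⟩
    rw [ha, ← EReal.coe_add]
    exact_mod_cast (by linarith : a < a + ε)
  -- lower bound for f (xs k) : finite
  have hlow : ∀ k, ((a + (⟪xbs, xs k - xb⟫ - r / 2 * ‖xs k - xb‖ ^ 2) : ℝ) : EReal)
      ≤ f (xs k) := by
    intro k
    have h := hP (xs k) (hmem k).2.2.1 (xb, xbs) hbmem
    rwa [ha, ← EReal.coe_add] at h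
  have hne : ∀ k, f (xs k) ≠ ⊥ ∧ f (xs k) ≠ ⊤ := by
    intro k
    constructor
    · intro hbot
      have := hlow k
      rw [hbot] at this
      exact (EReal.coe_ne_bot _) (le_bot_iff.1 this)
    · intro htop
      have h2 := (hmem k).2.1
      rw [htop, ha, ← EReal.coe_add] at h2
      exact not_top_lt h2
  set b : ℕ → ℝ := fun k => (f (xs k)).toReal with hbdef
  have hfb : ∀ k, f (xs k) = ((b k : ℝ) : EReal) := fun k =>
    (EReal.coe_toReal (hne k).2 (hne k).1).symm
  -- upper inequality at xh
  have hup : ∀ k, ((b k + (⟪vs k, xh - xs k⟫ - r / 2 * ‖xh - xs k‖ ^ 2) : ℝ) : EReal)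
      ≤ f xh := by
    intro k
    have h := hP xh hxb (xs k, vs k) (hmem k)
    rwa [hfb k, ← EReal.coe_add] at h
  -- f xh is finite
  have hfxh_ne_bot : f xh ≠ ⊥ := by
    intro hbot
    have := hup 0
    rw [hbot] at this
    exact (EReal.coe_ne_bot _) (le_bot_iff.1 this)
  have hfxh_ne_top : f xh ≠ ⊤ := by
    intro htop
    have hlt : ((a + ε : ℝ) : EReal) < f xh := by
      rw [htop]; exact EReal.coe_lt_top _
    have hev : ∀ᶠ x' in 𝓝 xh, ((a + ε : ℝ) : EReal) < f x' := hlsc xh _ hlt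
    have hev2 : ∀ᶠ k in atTop, ((a + ε : ℝ) : EReal) < f (xs k) := hx.eventually hev
    obtain ⟨k, hk⟩ := hev2.exists
    have h2 := (hmem k).2.1
    rw [ha, ← EReal.coe_add] at h2
    exact absurd (hk.trans h2) (lt_irrefl _)
  set A : ℝ := (f xh).toReal with hAdef
  have hA : f xh = ((A : ℝ) : EReal) := (EReal.coe_toReal hfxh_ne_top hfxh_ne_bot).symm
  -- the correction terms tend to 0
  have hcorr : Tendsto (fun k => ⟪vs k, xh - xs k⟫ - r / 2 * ‖xh - xs k‖ ^ 2) atTop (𝓝 0) := by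
    have h1 : Tendsto (fun k => (⟪vs k, xh - xs k⟫ - r / 2 * ‖xh - xs k‖ ^ 2 : ℝ)) atTop
        (𝓝 (⟪xhs, xh - xh⟫ - r / 2 * ‖xh - xh‖ ^ 2)) := by
      exact (hv.inner (tendsto_const_nhds.sub hx)).sub
        ((tendsto_const_nhds.mul (((tendsto_const_nhds.sub hx).norm).pow 2)))
    simpa using h1
  -- b k → A
  have hbA : Tendsto b atTop (𝓝 A) := by
    rw [tendsto_order]
    constructor
    · intro y hy
      have hlt : ((y : ℝ) : EReal) < f xh := by
        rw [hA]; exact_mod_cast hy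
      have hev : ∀ᶠ x' in 𝓝 xh, ((y : ℝ) : EReal) < f x' := hlsc xh _ hlt
      filter_upwards [hx.eventually hev] with k hk
      rw [hfb k] at hk
      exact_mod_cast hk
    · intro y hy
      have hev : ∀ᶠ k in atTop, A - y < ⟪vs k, xh - xs k⟫ - r / 2 * ‖xh - xs k‖ ^ 2 := by
        have : A - y < 0 := by linarith
        exact hcorr.eventually (eventually_gt_nhds this)
      filter_upwards [hev] with k hk
      have h := hup k
      rw [hA] at h
      have h' : b k + (⟪vs k, xh - xs k⟫ - r / 2 * ‖xh - xs k‖ ^ 2) ≤ A := by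
        exact_mod_cast h
      linarith
  have htend : Tendsto (fun k => f (xs k)) atTop (𝓝 (f xh)) := by
    simp only [hfb, hA]
    exact EReal.tendsto_coe.2 hbA
  -- key limiting inequality
  have hkey : ∀ x' ∈ ball xb ε,
      ((A + (⟪xhs, x' - xh⟫ - r / 2 * ‖x' - xh‖ ^ 2) : ℝ) : EReal) ≤ f x' := by
    intro x' hx'
    have hle : ∀ k, ((b k + (⟪vs k, x' - xs k⟫ - r / 2 * ‖x' - xs k‖ ^ 2) : ℝ) : EReal)
        ≤ f x' := by
      intro k
      have h := hP x' hx' (xs k, vs k) (hmem k)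
      rwa [hfb k, ← EReal.coe_add] at h
    have hterm : Tendsto (fun k => b k + (⟪vs k, x' - xs k⟫ - r / 2 * ‖x' - xs k‖ ^ 2)) atTop
        (𝓝 (A + (⟪xhs, x' - xh⟫ - r / 2 * ‖x' - xh‖ ^ 2))) := by
      exact hbA.add ((hv.inner (tendsto_const_nhds.sub hx)).sub
        (tendsto_const_nhds.mul (((tendsto_const_nhds.sub hx).norm).pow 2)))
    exact le_of_tendsto (EReal.tendsto_coe.2 hterm) (Filter.Eventually.of_forall hle)
  -- xhs is a Fréchet subgradient at xh
  have hF : xhs ∈ FSubdiff f xh := by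
    intro c hc
    have hεd : 0 < ε - dist xh xb := by
      have := mem_ball.1 hxb; linarith
    have hr1 : (0:ℝ) < r + 1 := by linarith
    have hδ2 : 0 < 2 * c / (r + 1) := by positivity
    refine ⟨min (ε - dist xh xb) (2 * c / (r + 1)), lt_min hεd hδ2, ?_⟩
    intro y hy
    have hdy := mem_ball.1 hy
    have hyb : y ∈ ball xb ε := by
      rw [mem_ball]
      have h1 : dist y xh < ε - dist xh xb := hdy.trans_le (min_le_left _ _)
      calc dist y xb ≤ dist y xh + dist xh xb := dist_triangle _ _ _
        _ < (ε - dist xh xb) + dist xh xb := by linarith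
        _ = ε := by ring
    have hk := hkey y hyb
    rw [hA, ← EReal.coe_add]
    refine le_trans ?_ hk
    apply EReal.coe_le_coe_iff.2
    set t : ℝ := ‖y - xh‖ with htdef
    have ht0 : 0 ≤ t := norm_nonneg _
    have htle : t ≤ 2 * c / (r + 1) := by
      have : dist y xh < 2 * c / (r + 1) := hdy.trans_le (min_le_right _ _)
      rw [dist_eq_norm] at this; linarith
    have h3 : t * (r + 1) ≤ 2 * c := (le_div_iff₀ hr1).1 htle
    have hq : r / 2 * t ^ 2 ≤ c * t := by
      nlinarith [mul_le_mul_of_nonneg_left h3 ht0, sq_nonneg t]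
    linarith
  exact ⟨⟨A, hA⟩, htend, ⟨fun _ => xh, fun _ => xhs, fun _ => hF,
    tendsto_const_nhds, tendsto_const_nhds, tendsto_const_nhds⟩⟩
end
end

section
/- Let f : ℝⁿ → ℝ ∪ {∞} be lower semicontinuous and prox-regular at x̄ for x̄* ∈ ∂f(x̄) with parameter values r ≥ 0 and ε > 0, and let T denote the f-attentive ε-localization of ∂f around (x̄, x̄*). Then the graph of T is locally closed at each of its points: for every (x̂, x̂*) ∈ gph T there is δ > 0 such that gph T ∩ (closed ball of radius δ around (x̂, x̂*)) is closed. -/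
open scoped RealInnerProductSpace
open Filter Topology Metric Matrix

noncomputable section

variable {n : ℕ}

/-!
Along a sequence `(xₖ, xₖ*)` in gph T converging to `(x, x*)`, the prox-regularity inequality at
`x` reads `f xₖ ≤ f x + o(1)`; with lower semicontinuity this makes the convergence f-attentive,
and since prox-regular subgradients are Fréchet subgradients, `x* ∈ ∂f(x)`. The prox-regularity
inequality itself passes to the limit; evaluated at `x' = x̂` it bounds `f x` by `f x̂` plus a
quantity that is small near `(x̂, x̂*)`, which keeps `f x < f x̄ + ε` strict on a small ball.
-/

theorem Filter.Tendsto.ereal_add_coe {ι : Type*} {l : Filter ι} {u : ι → EReal} {c : ι → ℝ}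
    {a : EReal} {t : ℝ} (hu : Tendsto u l (𝓝 a)) (hc : Tendsto c l (𝓝 t)) :
    Tendsto (fun i => u i + (c i : EReal)) l (𝓝 (a + t)) :=
  (EReal.continuousAt_add (Or.inr (EReal.coe_ne_bot t))
    (Or.inr (EReal.coe_ne_top t))).tendsto.comp (hu.prodMk_nhds (EReal.tendsto_coe.2 hc))

theorem LowerSemicontinuousAt.tendsto_of_add_le {X ι : Type*} [TopologicalSpace X]
    {l : Filter ι} {f : X → EReal} {x : X} {u : ι → X} {c : ι → ℝ}
    (hf : LowerSemicontinuousAt f x) (hu : Tendsto u l (𝓝 x)) (hc : Tendsto c l (𝓝 0))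
    (h : ∀ᶠ i in l, f (u i) + (c i : EReal) ≤ f x) :
    Tendsto (fun i => f (u i)) l (𝓝 (f x)) := by
  have hupper : Tendsto (fun i => f x + ((-c i : ℝ) : EReal)) l (𝓝 (f x)) := by
    simpa using tendsto_const_nhds.ereal_add_coe hc.neg
  refine tendsto_order.2 ⟨fun b hb => hu.eventually (hf b hb), fun b hb => ?_⟩
  filter_upwards [h, hupper.eventually (gt_mem_nhds hb)] with i hi hib
  refine lt_of_le_of_lt ?_ hib
  rw [EReal.coe_neg, ← sub_eq_add_neg]
  exact (EReal.le_sub_iff_add_le (Or.inl (EReal.coe_ne_bot _)) (Or.inl (EReal.coe_ne_top _))).2 hi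

def proxModel (r : ℝ) (x v x' : En n) : ℝ := ⟪v, x' - x⟫ - r / 2 * ‖x' - x‖ ^ 2

@[simp]
theorem proxModel_self (r : ℝ) (x v : En n) : proxModel r x v x = 0 := by
  simp [proxModel]

theorem continuous_proxModel (r : ℝ) (x' : En n) :
    Continuous fun p : En n × En n => proxModel r p.1 p.2 x' := by
  unfold proxModel
  fun_prop

theorem mem_FSubdiff_of_eventually_proxModel_le {f : En n → EReal} {x v : En n} {r : ℝ}
    (h : ∀ᶠ y in 𝓝 x, f x + (proxModel r x v y : EReal) ≤ f y) : v ∈ FSubdiff f x := by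
  intro c hc
  obtain ⟨ρ, hρ, hball⟩ := Metric.eventually_nhds_iff_ball.1 h
  refine ⟨min ρ (c / (|r| + 1)), by positivity, fun y hy => le_trans ?_
    (hball y (ball_subset_ball (min_le_left _ _) hy))⟩
  have ht : ‖y - x‖ * (|r| + 1) ≤ c := by
    rw [← le_div_iff₀ (by positivity), ← dist_eq_norm]
    exact (mem_ball.1 hy).le.trans (min_le_right _ _)
  have hquad : r / 2 * ‖y - x‖ ^ 2 ≤ c * ‖y - x‖ := by
    nlinarith [norm_nonneg (y - x), le_abs_self r, abs_nonneg r]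
  gcongr
  unfold proxModel
  linarith

theorem exists_closedBall_margin_of_mem_GphT {f : En n → EReal} {xb xbs : En n} {ε : ℝ}
    (r : ℝ) {p : En n × En n} (hp : p ∈ GphT f xb xbs ε) :
    ∃ δ > 0, ∀ q ∈ closedBall p δ, q.1 ∈ ball xb ε ∧ q.2 ∈ ball xbs ε ∧
      (f q.1 + (proxModel r q.1 q.2 p.1 : EReal) ≤ f p.1 → f q.1 < f xb + ε) := by
  obtain ⟨b, hpb, hb⟩ := EReal.exists_between_coe_real hp.2.1
  set U : Set (En n × En n) := {q | q.1 ∈ ball xb ε ∧ q.2 ∈ ball xbs ε ∧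
    (((b - proxModel r q.1 q.2 p.1 : ℝ) : EReal) < f xb + ε)}
  have hU : IsOpen U :=
    (isOpen_ball.preimage continuous_fst).inter ((isOpen_ball.preimage continuous_snd).inter
      (isOpen_lt (continuous_coe_real_ereal.comp
        (continuous_const.sub (continuous_proxModel r p.1))) continuous_const))
  have hpU : p ∈ U := ⟨hp.2.2.1, hp.2.2.2, by simpa using hb⟩
  obtain ⟨δ, hδ, hδU⟩ := Metric.isOpen_iff.1 hU p hpU
  refine ⟨δ / 2, half_pos hδ, fun q hq => ?_⟩
  obtain ⟨hq1, hq2, hqb⟩ := hδU (closedBall_subset_ball (half_lt_self hδ) hq)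
  refine ⟨hq1, hq2, fun hle => lt_trans ?_ hqb⟩
  rw [EReal.coe_sub, EReal.lt_sub_iff_add_lt (Or.inl (EReal.coe_ne_bot _))
    (Or.inl (EReal.coe_ne_top _))]
  exact hle.trans_lt hpb

namespace ProxReg

variable {f : En n → EReal} {xb xbs : En n} {r ε : ℝ}

theorem proxModel_le (hpr : ProxReg f xb xbs r ε) {p : En n × En n}
    (hp : p ∈ GphT f xb xbs ε) {x' : En n} (hx' : x' ∈ ball xb ε) :
    f p.1 + (proxModel r p.1 p.2 x' : EReal) ≤ f x' :=
  hpr.2.2.2.2 x' hx' p hp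

theorem mem_FSubdiff (hpr : ProxReg f xb xbs r ε) {p : En n × En n}
    (hp : p ∈ GphT f xb xbs ε) : p.2 ∈ FSubdiff f p.1 :=
  mem_FSubdiff_of_eventually_proxModel_le
    (eventually_of_mem (isOpen_ball.mem_nhds hp.2.2.1) fun _ hy => hpr.proxModel_le hp hy)

section Limits

variable {ι : Type*} {l : Filter ι} {ps : ι → En n × En n} {q : En n × En n}

theorem tendsto_apply_fst (hpr : ProxReg f xb xbs r ε) (hf : LowerSemicontinuousAt f q.1)
    (hps : ∀ i, ps i ∈ GphT f xb xbs ε) (hq : Tendsto ps l (𝓝 q)) (hq1 : q.1 ∈ ball xb ε) :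
    Tendsto (fun i => f (ps i).1) l (𝓝 (f q.1)) := by
  refine hf.tendsto_of_add_le (c := fun i => proxModel r (ps i).1 (ps i).2 q.1)
    ((continuous_fst.tendsto q).comp hq) ?_
    (Eventually.of_forall fun i => hpr.proxModel_le (hps i) hq1)
  have h := ((continuous_proxModel r q.1).tendsto q).comp hq
  rwa [proxModel_self] at h

theorem proxModel_le_of_tendsto [l.NeBot] (hpr : ProxReg f xb xbs r ε)
    (hf : LowerSemicontinuousAt f q.1) (hps : ∀ i, ps i ∈ GphT f xb xbs ε)
    (hq : Tendsto ps l (𝓝 q)) (hq1 : q.1 ∈ ball xb ε) {x' : En n} (hx' : x' ∈ ball xb ε) :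
    f q.1 + (proxModel r q.1 q.2 x' : EReal) ≤ f x' :=
  le_of_tendsto' ((hpr.tendsto_apply_fst hf hps hq hq1).ereal_add_coe
    (((continuous_proxModel r x').tendsto q).comp hq)) fun i => hpr.proxModel_le (hps i) hx'

end Limits

theorem mem_LSubdiff_of_tendsto (hpr : ProxReg f xb xbs r ε) {ps : ℕ → En n × En n}
    {q : En n × En n} (hf : LowerSemicontinuousAt f q.1) (hps : ∀ k, ps k ∈ GphT f xb xbs ε)
    (hq : Tendsto ps atTop (𝓝 q)) (hq1 : q.1 ∈ ball xb ε) : q.2 ∈ LSubdiff f q.1 :=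
  ⟨_, _, fun k => hpr.mem_FSubdiff (hps k), (continuous_fst.tendsto q).comp hq,
    hpr.tendsto_apply_fst hf hps hq hq1, (continuous_snd.tendsto q).comp hq⟩

end ProxReg

theorem stmt1 (f : En n → EReal) (xb xbs : En n) (r ε : ℝ)
    (hlsc : LowerSemicontinuous f) (hpr : ProxReg f xb xbs r ε) :
    ∀ p ∈ GphT f xb xbs ε, ∃ δ > (0:ℝ),
      IsClosed (GphT f xb xbs ε ∩ closedBall p δ) := by
  intro p hp
  obtain ⟨δ, hδ, hmargin⟩ := exists_closedBall_margin_of_mem_GphT r hp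
  refine ⟨δ, hδ, IsSeqClosed.isClosed fun ps q hps hq => ?_⟩
  have hgph : ∀ k, ps k ∈ GphT f xb xbs ε := fun k => (hps k).1
  have hqδ : q ∈ closedBall p δ :=
    isClosed_closedBall.mem_of_tendsto hq (Eventually.of_forall fun k => (hps k).2)
  obtain ⟨hq1, hq2, hlt⟩ := hmargin q hqδ
  have hfq : f q.1 < f xb + ε :=
    hlt (hpr.proxModel_le_of_tendsto (hlsc _) hgph hq hq1 hp.2.2.1)
  exact ⟨⟨hpr.mem_LSubdiff_of_tendsto (hlsc _) hgph hq hq1, hfq, hq1, hq2⟩, hqδ⟩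
end
end

section
/- Let f : ℝⁿ → ℝ ∪ {∞} be lower semicontinuous and prox-regular at x̄ for x̄* with parameters r ≥ 0 and ε > 0, and let T be the f-attentive ε-localization of ∂f around (x̄, x̄*). Then for every (x̃, x̃*) ∈ gph T, the f-attentive tangent cone to gph ∂f at (x̃, x̃*) coincides with the ordinary (Bouligand) tangent cone to gph T at (x̃, x̃*). -/
open scoped RealInnerProductSpace
open Filter Topology Metric Matrix

noncomputable section

variable {n : ℕ}

/-- The f-attentive tangent cone to the graph of ∂f at (x, x*). -/
def AttTangent (f : En n → EReal) (x xstar : En n) : Set (En n × En n) :=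
  {u | ∃ (t : ℕ → ℝ) (xs vs : ℕ → En n), (∀ k, 0 < t k) ∧ Tendsto t atTop (𝓝 0) ∧
    (∀ k, vs k ∈ LSubdiff f (xs k)) ∧ Tendsto xs atTop (𝓝 x) ∧
    Tendsto (fun k => f (xs k)) atTop (𝓝 (f x)) ∧ Tendsto vs atTop (𝓝 xstar) ∧
    Tendsto (fun k => (t k)⁻¹ • ((xs k, vs k) - (x, xstar))) atTop (𝓝 u)}

/-- The ordinary (Bouligand) tangent cone to a set C at p. -/
def TanCone (C : Set (En n × En n)) (p : En n × En n) : Set (En n × En n) :=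
  {u | ∃ (t : ℕ → ℝ) (c : ℕ → En n × En n), (∀ k, 0 < t k) ∧ Tendsto t atTop (𝓝 0) ∧
    (∀ k, c k ∈ C) ∧ Tendsto c atTop (𝓝 p) ∧
    Tendsto (fun k => (t k)⁻¹ • (c k - p)) atTop (𝓝 u)}

/-! The prox-regularity inequality at `x' = x̃`, applied along a sequence `(x_k, x_k*)` of `gph T`
converging to `(x̃, x̃*)`, bounds `f x_k` above by `f x̃` plus a vanishing error, while lower
semicontinuity bounds it below; so convergence inside `gph T` is automatically `f`-attentive.
Conversely, the localization conditions are open, so an `f`-attentive sequence of `gph ∂f`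
converging to a point of `gph T` eventually lies in `gph T`. -/

theorem LowerSemicontinuousAt.tendsto_of_add_le_s4 {α ι : Type*} [TopologicalSpace α]
    {f : α → EReal} {x : α} {l : Filter ι} {g : ι → α} {a : ι → ℝ}
    (hf : LowerSemicontinuousAt f x) (hg : Tendsto g l (𝓝 x)) (ha : Tendsto a l (𝓝 0))
    (hle : ∀ k, f (g k) + a k ≤ f x) :
    Tendsto (fun k => f (g k)) l (𝓝 (f x)) := by
  have hneg : Tendsto (fun k => ((-a k : ℝ) : EReal)) l (𝓝 0) :=
    EReal.tendsto_coe.2 (by simpa using ha.neg)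
  have hupper : Tendsto (fun k => f x + ((-a k : ℝ) : EReal)) l (𝓝 (f x)) := by
    have hadd := EReal.continuousAt_add (p := (f x, 0)) (.inr EReal.zero_ne_bot)
      (.inr EReal.zero_ne_top)
    simpa [Function.comp_def] using hadd.tendsto.comp (tendsto_const_nhds.prodMk_nhds hneg)
  refine tendsto_order.2 ⟨fun y hy => hg.eventually (hf y hy), fun y hy => ?_⟩
  filter_upwards [hupper.eventually_lt_const hy] with k hk
  refine lt_of_le_of_lt ?_ hk
  rw [EReal.coe_neg, ← sub_eq_add_neg]
  exact (EReal.le_sub_iff_add_le (.inl (EReal.coe_ne_bot _)) (.inl (EReal.coe_ne_top _))).2 (hle k)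

theorem ProxReg.tendsto_apply_fst_s4 {ι : Type*} {f : En n → EReal} {xb xbs : En n} {r ε : ℝ}
    {p : En n × En n} (hlsc : LowerSemicontinuousAt f p.1) (hpr : ProxReg f xb xbs r ε)
    (hp : p ∈ GphT f xb xbs ε) {l : Filter ι} {c : ι → En n × En n}
    (hc : ∀ k, c k ∈ GphT f xb xbs ε) (hcp : Tendsto c l (𝓝 p)) :
    Tendsto (fun k => f (c k).1) l (𝓝 (f p.1)) := by
  have hdiff : Tendsto (fun k => p.1 - (c k).1) l (𝓝 0) := by
    simpa using (tendsto_const_nhds (x := p.1)).sub hcp.fst_nhds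
  have herr : Tendsto (fun k => ⟪(c k).2, p.1 - (c k).1⟫ - r / 2 * ‖p.1 - (c k).1‖ ^ 2) l
      (𝓝 0) := by
    simpa using (hcp.snd_nhds.inner hdiff).sub (tendsto_const_nhds.mul (hdiff.norm.pow 2))
  obtain ⟨-, -, -, -, hprox⟩ := hpr
  exact hlsc.tendsto_of_add_le_s4 hcp.fst_nhds herr fun k => hprox p.1 hp.2.2.1 (c k) (hc k)

theorem mem_tanCone_of_eventually_mem {C : Set (En n × En n)} {p u : En n × En n}
    {t : ℕ → ℝ} {c : ℕ → En n × En n} (ht_pos : ∀ k, 0 < t k) (ht : Tendsto t atTop (𝓝 0))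
    (hc : ∀ᶠ k in atTop, c k ∈ C) (hcp : Tendsto c atTop (𝓝 p))
    (hu : Tendsto (fun k => (t k)⁻¹ • (c k - p)) atTop (𝓝 u)) :
    u ∈ TanCone C p := by
  obtain ⟨N, hN⟩ := eventually_atTop.1 hc
  have hshift := tendsto_add_atTop_nat N
  exact ⟨fun k => t (k + N), fun k => c (k + N), fun k => ht_pos _, ht.comp hshift,
    fun k => hN _ (Nat.le_add_left N k), hcp.comp hshift, hu.comp hshift⟩

theorem attTangent_subset_tanCone_gphT {f : En n → EReal} {xb xbs : En n} {ε : ℝ}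
    {p : En n × En n} (hp : p ∈ GphT f xb xbs ε) :
    AttTangent f p.1 p.2 ⊆ TanCone (GphT f xb xbs ε) p := by
  rintro u ⟨t, xs, vs, ht_pos, ht, hsub, hxs, hfxs, hvs, hu⟩
  refine mem_tanCone_of_eventually_mem ht_pos ht ?_ (hxs.prodMk_nhds hvs) hu
  filter_upwards [hfxs.eventually_lt_const hp.2.1,
    hxs.eventually (isOpen_ball.mem_nhds hp.2.2.1),
    hvs.eventually (isOpen_ball.mem_nhds hp.2.2.2)] with k hf hx hv
  exact ⟨hsub k, hf, hx, hv⟩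

theorem ProxReg.tanCone_gphT_subset_attTangent {f : En n → EReal} {xb xbs : En n} {r ε : ℝ}
    {p : En n × En n} (hlsc : LowerSemicontinuousAt f p.1) (hpr : ProxReg f xb xbs r ε)
    (hp : p ∈ GphT f xb xbs ε) :
    TanCone (GphT f xb xbs ε) p ⊆ AttTangent f p.1 p.2 := by
  rintro u ⟨t, c, ht_pos, ht, hc, hcp, hu⟩
  exact ⟨t, fun k => (c k).1, fun k => (c k).2, ht_pos, ht, fun k => (hc k).1, hcp.fst_nhds,
    hpr.tendsto_apply_fst_s4 hlsc hp hc hcp, hcp.snd_nhds, hu⟩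

theorem stmt4 (f : En n → EReal) (xb xbs : En n) (r ε : ℝ)
    (hlsc : LowerSemicontinuous f) (hpr : ProxReg f xb xbs r ε) :
    ∀ p ∈ GphT f xb xbs ε,
      AttTangent f p.1 p.2 = TanCone (GphT f xb xbs ε) p :=
  fun _ hp => (attTangent_subset_tanCone_gphT hp).antisymm
    (hpr.tanCone_gphT_subset_attTangent (hlsc _) hp)
end
end

section
/- Let f : ℝⁿ → ℝ ∪ {∞}, let x̄* ∈ ∂f(x̄), let g : ℝⁿ → ℝ be twice continuously differentiable, and set h := f + g. Then the h-attentive tangent cone to gph ∂h at (x̄, x̄* + ∇g(x̄)) equals Ā · T^f_{gph ∂f}(x̄, x̄*), where Ā is the block matrix [[I, 0], [∇²g(x̄), I]] acting on ℝⁿ × ℝⁿ. -/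
/-!
The shear `(x, x*) ↦ (x, x* + ∇g(x))` maps `gph ∂f` into `gph ∂h`, because adding the gradient of
a differentiable function to a regular subgradient gives a regular subgradient of the sum. It
preserves `f`-attentive convergence since `g` and `∇g` are continuous, and it carries difference
quotients at `(x̄, x̄*)` to difference quotients transformed by its derivative `Ā`. This gives
`Ā · T^f ⊆ T^h`; the same inclusion for `h = f + g` and `-g` gives the reverse one.
-/

open scoped RealInnerProductSpace
open Filter Topology Metric Matrix

noncomputable section

variable {n : ℕ}

open Set

theorem HasGradientAt.neg {𝕜 F : Type*} [RCLike 𝕜] [NormedAddCommGroup F] [InnerProductSpace 𝕜 F]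
    [CompleteSpace F] {g : F → 𝕜} {g' x : F} (hg : HasGradientAt g g' x) :
    HasGradientAt (fun y => -g y) (-g') x := by
  rw [hasGradientAt_iff_hasFDerivAt, map_neg]
  exact hg.hasFDerivAt.neg

theorem ContDiff.gradient {F : Type*} [NormedAddCommGroup F] [InnerProductSpace ℝ F]
    [CompleteSpace F] {g : F → ℝ} {k : WithTop ℕ∞} (hg : ContDiff ℝ (k + 1) g) :
    ContDiff ℝ k (gradient g) :=
  (InnerProductSpace.toDual ℝ F).symm.contDiff.comp (hg.fderiv_right le_rfl)

theorem EReal.tendsto_add_coe {α : Type*} {l : Filter α} {a : α → EReal} {a₀ : EReal}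
    {r : α → ℝ} {r₀ : ℝ} (ha : Tendsto a l (𝓝 a₀)) (hr : Tendsto r l (𝓝 r₀)) :
    Tendsto (fun k => a k + (r k : EReal)) l (𝓝 (a₀ + r₀)) :=
  (EReal.continuousAt_add (.inr (EReal.coe_ne_bot r₀)) (.inr (EReal.coe_ne_top r₀))).tendsto.comp
    (ha.prodMk_nhds (EReal.tendsto_coe.2 hr))

variable {f : En n → EReal} {g : En n → ℝ}

theorem HasGradientAt.add_mem_fSubdiff_add {g' x v : En n} (hg : HasGradientAt g g' x)
    (hv : v ∈ FSubdiff f x) : v + g' ∈ FSubdiff (fun y => f y + g y) x := by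
  intro c hc
  obtain ⟨δ₁, hδ₁, hf⟩ := hv (c / 2) (by linarith)
  have hlin : ∀ᶠ y in 𝓝 x, ‖g y - g x - ⟪g', y - x⟫‖ ≤ c / 2 * ‖y - x‖ := by
    simpa only [InnerProductSpace.toDual_apply_apply] using
      hg.hasFDerivAt.isLittleO.def (by linarith : 0 < c / 2)
  obtain ⟨δ₂, hδ₂, hg⟩ := Metric.eventually_nhds_iff_ball.1 hlin
  refine ⟨min δ₁ δ₂, lt_min hδ₁ hδ₂, fun y hy => ?_⟩
  have hreal : g x + (⟪v + g', y - x⟫ - c * ‖y - x‖) ≤ g y + (⟪v, y - x⟫ - c / 2 * ‖y - x‖) := by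
    have := abs_le.1 (hg y (ball_subset_ball (min_le_right _ _) hy))
    rw [inner_add_left]
    linarith
  calc f x + g x + ((⟪v + g', y - x⟫ - c * ‖y - x‖ : ℝ) : EReal)
      = f x + ((g x + (⟪v + g', y - x⟫ - c * ‖y - x‖) : ℝ) : EReal) := by
        rw [EReal.coe_add, add_assoc]
    _ ≤ f x + ((g y + (⟪v, y - x⟫ - c / 2 * ‖y - x‖) : ℝ) : EReal) := by
        gcongr
    _ = f x + ((⟪v, y - x⟫ - c / 2 * ‖y - x‖ : ℝ) : EReal) + g y := by
        rw [EReal.coe_add, add_comm ((g y : ℝ) : EReal), add_assoc]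
    _ ≤ f y + g y := by
        gcongr
        exact hf y (ball_subset_ball (min_le_left _ _) hy)

variable {G : En n → En n}

theorem add_mem_lSubdiff_add (hg : ∀ x, HasGradientAt g (G x) x) (hG : Continuous G)
    {x v : En n} (hv : v ∈ LSubdiff f x) : v + G x ∈ LSubdiff (fun y => f y + g y) x := by
  obtain ⟨xs, vs, hsub, hxs, hfxs, hvs⟩ := hv
  have hgc : Continuous g := Differentiable.continuous fun x => (hg x).differentiableAt
  exact ⟨xs, fun k => vs k + G (xs k), fun k => (hg (xs k)).add_mem_fSubdiff_add (hsub k), hxs,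
    EReal.tendsto_add_coe hfxs ((hgc.tendsto x).comp hxs), hvs.add ((hG.tendsto x).comp hxs)⟩

theorem shear_mem_attTangent_add (hg : ∀ x, HasGradientAt g (G x) x) (hG : Continuous G)
    {xb xbs : En n} {D : En n →L[ℝ] En n} (hD : HasFDerivAt G D xb) {u : En n × En n}
    (hu : u ∈ AttTangent f xb xbs) :
    (u.1, D u.1 + u.2) ∈ AttTangent (fun x => f x + g x) xb (xbs + G xb) := by
  obtain ⟨t, xs, vs, ht, ht0, hsub, hxs, hfxs, hvs, hquot⟩ := hu
  have hgc : Continuous g := Differentiable.continuous fun x => (hg x).differentiableAt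
  have hq₁ : Tendsto (fun k => (t k)⁻¹ • (xs k - xb)) atTop (𝓝 u.1) := hquot.fst_nhds
  have hq₂ : Tendsto (fun k => (t k)⁻¹ • (vs k - xbs)) atTop (𝓝 u.2) := hquot.snd_nhds
  have hqG : Tendsto (fun k => (t k)⁻¹ • (G (xs k) - G xb)) atTop (𝓝 (D u.1)) := by
    simpa only [add_sub_cancel] using (hD.hasFDerivWithinAt (s := univ)).lim
      (tendsto_sub_nhds_zero_iff.2 hxs) (.of_forall fun _ => mem_univ _) hq₁
  refine ⟨t, xs, fun k => vs k + G (xs k), ht, ht0,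
    fun k => add_mem_lSubdiff_add hg hG (hsub k), hxs,
    EReal.tendsto_add_coe hfxs ((hgc.tendsto xb).comp hxs), hvs.add ((hG.tendsto xb).comp hxs), ?_⟩
  refine hq₁.prodMk_nhds ?_
  convert hqG.add hq₂ using 2 with k
  simp only [Prod.snd_sub]
  module

theorem stmt5_general (f : En n → EReal) (xb xbs : En n)
    (g : En n → ℝ) (hg : ContDiff ℝ 2 g) :
    AttTangent (fun x => f x + ((g x : ℝ) : EReal)) xb (xbs + gradient g xb)
      = (fun u : En n × En n => (u.1, fderiv ℝ (gradient g) xb u.1 + u.2)) ''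
          AttTangent f xb xbs := by
  set D := fderiv ℝ (gradient g) xb
  have hgrad : ∀ x, HasGradientAt g (gradient g x) x :=
    fun x => (hg.differentiable two_ne_zero x).hasGradientAt
  have hG : ContDiff ℝ 1 (gradient g) := hg.gradient
  have hD : HasFDerivAt (gradient g) D xb := (hG.differentiable one_ne_zero xb).hasFDerivAt
  have hcancel : (fun x => f x + g x + -(g x : EReal)) = f := by
    funext x
    rw [← sub_eq_add_neg, EReal.add_sub_cancel_right]
  refine Subset.antisymm (fun w hw => ⟨(w.1, -D w.1 + w.2), ?_, by simp⟩) ?_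
  · simpa [hcancel] using
      shear_mem_attTangent_add (fun x => (hgrad x).neg) hG.continuous.neg hD.neg hw
  · rintro _ ⟨u, hu, rfl⟩
    exact shear_mem_attTangent_add hgrad hG.continuous hD hu

theorem stmt5 (f : En n → EReal) (xb xbs : En n) (hx : xbs ∈ LSubdiff f xb)
    (g : En n → ℝ) (hg : ContDiff ℝ 2 g) :
    AttTangent (fun x => f x + ((g x : ℝ) : EReal)) xb (xbs + gradient g xb)
      = (fun u : En n × En n => (u.1, fderiv ℝ (gradient g) xb u.1 + u.2)) ''
          AttTangent f xb xbs :=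
  stmt5_general f xb xbs g hg
end
end

section
/- If the lsc function f : ℝⁿ → ℝ ∪ {∞} is variationally s-convex at x̄ for x̄* ∈ ∂f(x̄), then f is prox-regular at x̄ for x̄* with parameter value r = max{−s, 0}. Conversely, if f is prox-regular at x̄ for x̄* with parameter value r ≥ 0, then f is variationally (−r)-convex at x̄ for x̄*. -/
open scoped RealInnerProductSpace
open Filter Topology Metric Matrix

noncomputable section

variable {n : ℕ}

/-- Variational s-convexity of f at x̄ for x̄*. -/
def VarConv (f : En n → EReal) (s : ℝ) (xb xbs : En n) : Prop :=
  (∃ a : ℝ, f xb = (a : EReal)) ∧ xbs ∈ LSubdiff f xb ∧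
  ∃ (U V : Set (En n)) (fh : En n → EReal) (ρ : ℝ),
    IsOpen U ∧ Convex ℝ U ∧ xb ∈ U ∧ IsOpen V ∧ Convex ℝ V ∧ xbs ∈ V ∧
    LowerSemicontinuous fh ∧ f xb < (ρ : EReal) ∧
    -- fh - (s/2)‖·‖² is convex on U
    (∀ x ∈ U, ∀ y ∈ U, ∀ a b : ℝ, 0 ≤ a → 0 ≤ b → a + b = 1 →
      fh (a • x + b • y) +
        ((s / 2 * (a * ‖x‖ ^ 2 + b * ‖y‖ ^ 2 - ‖a • x + b • y‖ ^ 2) : ℝ) : EReal)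
        ≤ (a : EReal) * fh x + (b : EReal) * fh y) ∧
    (∀ x ∈ U, fh x ≤ f x) ∧
    ({p : En n × En n | p.2 ∈ LSubdiff f p.1 ∧ f p.1 < (ρ : EReal)} ∩ U ×ˢ V
      = {p : En n × En n | p.2 ∈ LSubdiff fh p.1} ∩ U ×ˢ V) ∧
    (∀ p ∈ {p : En n × En n | p.2 ∈ LSubdiff f p.1 ∧ f p.1 < (ρ : EReal)} ∩ U ×ˢ V,
      f p.1 = fh p.1)

/-!
Along a segment from `z` to `y`, the Fréchet inequality at `z` and the convexity of
`fh - (s/2)‖·‖²` give a chord estimate whose slope at `z` is the quadratic growth bound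
`fh y ≥ fh z + ⟪w, y - z⟫ + (s/2)‖y - z‖²`. This inequality survives the `fh`-attentive limits
defining limiting subgradients, and `fh ≤ f`, with equality on the localized graph, turns it
into prox-regularity.

Conversely, for prox-regular `f` the supremum `g` of the quadratic minorants attached to the
localized graph of `∂f` is finite, lower semicontinuous, `(-r)`-convex, below `f` near `x̄` and
equal to `f` on that graph. If `v ∈ ∂g(x)` with `(x, v)` near `(x̄, x̄*)`, let `y` be the
proximal point of `f` at `x + λv` and `w = (x + λv - y)/λ ∈ ∂f(y)`. The growth of `g` at `x`
and the minorant attached to `(y, w)` give `⟪w - v, x - y⟫ ≤ r‖x - y‖²`, while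
`x - y = λ(w - v)`; for `λr < 1` this forces `w = v` and `y = x`.
-/

open Set

lemma convex_combination_norm_sq {E : Type*} [NormedAddCommGroup E] [InnerProductSpace ℝ E]
    (x y : E) {a b : ℝ} (hab : a + b = 1) :
    a * ‖x‖ ^ 2 + b * ‖y‖ ^ 2 - ‖a • x + b • y‖ ^ 2 = a * b * ‖y - x‖ ^ 2 := by
  obtain rfl := eq_sub_of_add_eq' hab
  rw [norm_add_sq_real, norm_sub_sq_real, norm_smul, norm_smul, real_inner_smul_left,
    real_inner_smul_right, mul_pow, mul_pow, Real.norm_eq_abs, Real.norm_eq_abs, sq_abs, sq_abs,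
    real_inner_comm]
  ring

lemma norm_le_four_mul_of_prox_le {E : Type*} [NormedAddCommGroup E] [InnerProductSpace ℝ E]
    {u d g : E} {lam r : ℝ} (hlam : 0 < lam) (hlamr : lam * r ≤ 1 / 2)
    (h : ⟪g, u⟫ - r / 2 * ‖u‖ ^ 2 + ‖u - d‖ ^ 2 / (2 * lam) ≤ ‖d‖ ^ 2 / (2 * lam)) :
    ‖u‖ ≤ 4 * ‖d - lam • g‖ := by
  have hexpand : 2 * lam * ⟪g, u⟫ - lam * r * ‖u‖ ^ 2 + ‖u‖ ^ 2 - 2 * ⟪u, d⟫ ≤ 0 := by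
    rw [norm_sub_sq_real] at h
    field_simp at h
    linarith
  have hinner : ⟪u, d - lam • g⟫ ≤ ‖u‖ * ‖d - lam • g‖ := real_inner_le_norm _ _
  rw [inner_sub_right, real_inner_smul_right, real_inner_comm g u] at hinner
  have hsq : ‖u‖ ^ 2 ≤ 4 * ‖u‖ * ‖d - lam • g‖ := by
    nlinarith [mul_nonneg (sub_nonneg.2 hlamr) (sq_nonneg ‖u‖)]
  by_contra! hlt
  nlinarith [norm_nonneg (d - lam • g)]

lemma eq_of_inner_sub_le_of_sub_eq_smul {E : Type*} [NormedAddCommGroup E]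
    [InnerProductSpace ℝ E] {x y v w : E} {lam r : ℝ} (hlam : 0 < lam) (hlamr : lam * r < 1)
    (hxy : x - y = lam • (w - v)) (h : ⟪w - v, x - y⟫ ≤ r * ‖x - y‖ ^ 2) : w = v := by
  rw [hxy, real_inner_smul_right, real_inner_self_eq_norm_sq, norm_smul, Real.norm_of_nonneg
    hlam.le] at h
  have hsq : lam * (1 - lam * r) * ‖w - v‖ ^ 2 ≤ 0 := by nlinarith
  have hpos : 0 < lam * (1 - lam * r) := mul_pos hlam (by linarith)
  have : ‖w - v‖ ^ 2 = 0 := le_antisymm (nonpos_of_mul_nonpos_right hsq hpos) (sq_nonneg _)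
  simpa [sub_eq_zero] using this

lemma EReal.add_coe_sub_le_of_add_coe_le {x y : EReal} {A B : ℝ} (h : x + A ≤ y + B) :
    x + ((A - B : ℝ) : EReal) ≤ y :=
  (EReal.addLECancellable_coe B).add_le_add_iff_right.1 <| by
    rwa [add_assoc, ← EReal.coe_add, _root_.sub_add_cancel]

lemma FSubdiff_subset_LSubdiff (f : En n → EReal) (x : En n) : FSubdiff f x ⊆ LSubdiff f x :=
  fun _ hv => ⟨fun _ => x, fun _ => _, fun _ => hv, tendsto_const_nhds, tendsto_const_nhds,
    tendsto_const_nhds⟩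

lemma mem_FSubdiff_of_forall_ball_le {φ : En n → EReal} {x v : En n} {r δ : ℝ} (hδ : 0 < δ)
    (h : ∀ y ∈ ball x δ, φ x + ((⟪v, y - x⟫ - r / 2 * ‖y - x‖ ^ 2 : ℝ) : EReal) ≤ φ y) :
    v ∈ FSubdiff φ x := by
  intro c hc
  refine ⟨min δ (2 * c / (|r| + 1)), lt_min hδ (by positivity), fun y hy => ?_⟩
  refine le_trans (add_le_add le_rfl (EReal.coe_le_coe_iff.2 ?_))
    (h y (ball_subset_ball (min_le_left _ _) hy))
  have hsmall : ‖y - x‖ * (|r| + 1) ≤ 2 * c :=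
    (le_div_iff₀ (by positivity)).1 ((mem_ball_iff_norm.1 hy).le.trans (min_le_right _ _))
  nlinarith [le_abs_self r, norm_nonneg (y - x), abs_nonneg r]

lemma inv_smul_sub_mem_FSubdiff_of_prox {f : En n → EReal} {y₀ z : En n} {lam δ : ℝ}
    (hlam : 0 < lam) (hδ : 0 < δ)
    (hmin : ∀ y ∈ ball y₀ δ, f y₀ + ((‖y₀ - z‖ ^ 2 / (2 * lam) : ℝ) : EReal)
      ≤ f y + ((‖y - z‖ ^ 2 / (2 * lam) : ℝ) : EReal)) :
    lam⁻¹ • (z - y₀) ∈ FSubdiff f y₀ := by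
  refine mem_FSubdiff_of_forall_ball_le (r := lam⁻¹) hδ fun y hy => ?_
  convert EReal.add_coe_sub_le_of_add_coe_le (hmin y hy) using 3
  rw [show y - z = (y - y₀) + (y₀ - z) by abel, norm_add_sq_real, real_inner_smul_left,
    show z - y₀ = -(y₀ - z) by abel, inner_neg_left, real_inner_comm]
  field_simp
  ring

/-- `φ - (s/2)‖·‖²` is convex on `U`, in the form used by `VarConv`. -/
def QuadConvexOn (s : ℝ) (U : Set (En n)) (φ : En n → EReal) : Prop :=
  ∀ x ∈ U, ∀ y ∈ U, ∀ a b : ℝ, 0 ≤ a → 0 ≤ b → a + b = 1 →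
    φ (a • x + b • y) + ((s / 2 * (a * ‖x‖ ^ 2 + b * ‖y‖ ^ 2 - ‖a • x + b • y‖ ^ 2) : ℝ) : EReal)
      ≤ (a : EReal) * φ x + (b : EReal) * φ y

namespace QuadConvexOn

variable {s : ℝ} {U : Set (En n)} {φ : En n → EReal}

lemma eventually_chord_le (hφ : QuadConvexOn s U φ) {z y w : En n}
    (hz : z ∈ U) (hy : y ∈ U) {c : ℝ} (hc : φ z = c) (hw : w ∈ FSubdiff φ z) {η : ℝ}
    (hη : 0 < η) :
    ∀ᶠ t in 𝓝[>] (0 : ℝ), 0 < t ∧ t < 1 ∧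
      ((c + t * (⟪w, y - z⟫ - η * ‖y - z‖ + s / 2 * (1 - t) * ‖y - z‖ ^ 2) : ℝ) : EReal)
        ≤ ((1 - t : ℝ) : EReal) * c + (t : EReal) * φ y := by
  obtain ⟨δ, hδ, hball⟩ := hw η hη
  have hseg : Tendsto (fun t : ℝ => z + t • (y - z)) (𝓝[>] 0) (𝓝 z) := by
    have : Continuous (fun t : ℝ => z + t • (y - z)) := by fun_prop
    simpa using this.continuousWithinAt.tendsto (x := 0) (s := Ioi 0)
  filter_upwards [self_mem_nhdsWithin, Ioo_mem_nhdsGT (zero_lt_one' ℝ),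
    hseg.eventually (ball_mem_nhds z hδ)] with t ht0 ht1 htδ
  have hzt : z + t • (y - z) = (1 - t) • z + t • y := by module
  have hfrechet := hball _ htδ
  have hconv := hφ z hz y hy (1 - t) t (by linarith [ht1.2]) ht0.le (by ring)
  rw [convex_combination_norm_sq z y (by ring), ← hzt, hc] at hconv
  rw [hc, add_sub_cancel_left, norm_smul, Real.norm_of_nonneg ht0.le, inner_smul_right]
    at hfrechet
  refine ⟨ht0, ht1.2, le_trans ?_ hconv⟩
  calc ((c + t * (⟪w, y - z⟫ - η * ‖y - z‖ + s / 2 * (1 - t) * ‖y - z‖ ^ 2) : ℝ) : EReal)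
      = (c : EReal) + ((t * ⟪w, y - z⟫ - η * (t * ‖y - z‖) : ℝ) : EReal)
          + ((s / 2 * ((1 - t) * t * ‖y - z‖ ^ 2) : ℝ) : EReal) := by
        norm_cast; ring
    _ ≤ _ := by gcongr

lemma add_le_of_mem_FSubdiff (hφ : QuadConvexOn s U φ) {z y w : En n} (hz : z ∈ U) (hy : y ∈ U)
    (hzt : φ z ≠ ⊤) (hw : w ∈ FSubdiff φ z) :
    φ z + ((⟪w, y - z⟫ + s / 2 * ‖y - z‖ ^ 2 : ℝ) : EReal) ≤ φ y := by
  rcases eq_or_ne (φ z) ⊥ with hbot | hbot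
  · simp [hbot]
  obtain ⟨c, hc⟩ : ∃ c : ℝ, φ z = c := ⟨_, (EReal.coe_toReal hzt hbot).symm⟩
  rw [hc]
  generalize hd : φ y = e
  induction e using EReal.rec with
  | top => exact le_top
  | bot =>
    obtain ⟨t, ht0, -, ht⟩ := (hφ.eventually_chord_le hz hy hc hw one_pos).exists
    rw [hd, EReal.mul_bot_of_pos (by exact_mod_cast ht0), EReal.add_bot, le_bot_iff] at ht
    exact absurd ht (EReal.coe_ne_bot _)
  | coe d =>
    norm_cast
    set R := ‖y - z‖
    have slope : ∀ η > 0, ⟪w, y - z⟫ - η * R + s / 2 * R ^ 2 ≤ d - c := by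
      intro η hη
      have hlim : Tendsto (fun t => ⟪w, y - z⟫ - η * R + s / 2 * (1 - t) * R ^ 2) (𝓝[>] 0)
          (𝓝 (⟪w, y - z⟫ - η * R + s / 2 * R ^ 2)) :=
        tendsto_nhdsWithin_of_tendsto_nhds <| Continuous.tendsto' (by fun_prop) _ _ (by simp)
      refine le_of_tendsto hlim ?_
      filter_upwards [hφ.eventually_chord_le hz hy hc hw hη] with t ht
      obtain ⟨ht0, -, ht⟩ := ht
      rw [hd] at ht
      norm_cast at ht
      exact le_of_mul_le_mul_left (by linarith) ht0
    have hlim : Tendsto (fun η => ⟪w, y - z⟫ - η * R + s / 2 * R ^ 2) (𝓝[>] 0)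
        (𝓝 (⟪w, y - z⟫ + s / 2 * R ^ 2)) :=
      tendsto_nhdsWithin_of_tendsto_nhds <| Continuous.tendsto' (by fun_prop) _ _ (by simp)
    linarith [le_of_tendsto hlim (eventually_nhdsWithin_of_forall slope)]

lemma add_le_of_mem_LSubdiff (hφ : QuadConvexOn s U φ) (hU : IsOpen U) {x y v : En n}
    (hx : x ∈ U) (hy : y ∈ U) (hxt : φ x ≠ ⊤) (hv : v ∈ LSubdiff φ x) :
    φ x + ((⟪v, y - x⟫ + s / 2 * ‖y - x‖ ^ 2 : ℝ) : EReal) ≤ φ y := by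
  obtain ⟨xs, vs, hF, hxs, hφs, hvs⟩ := hv
  have hquad : Tendsto (fun k => ⟪vs k, y - xs k⟫ + s / 2 * ‖y - xs k‖ ^ 2) atTop
      (𝓝 (⟪v, y - x⟫ + s / 2 * ‖y - x‖ ^ 2)) :=
    (hvs.inner (tendsto_const_nhds.sub hxs)).add
      (((tendsto_const_nhds.sub hxs).norm.pow 2).const_mul _)
  have hlim := (EReal.continuousAt_add (Or.inr (EReal.coe_ne_bot _))
    (Or.inr (EReal.coe_ne_top _))).tendsto.comp (hφs.prodMk_nhds (EReal.tendsto_coe.2 hquad))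
  refine le_of_tendsto hlim ?_
  filter_upwards [hxs.eventually (hU.mem_nhds hx), hφs.eventually_ne hxt] with k hk hkt
  exact hφ.add_le_of_mem_FSubdiff hk hy hkt (hF k)

end QuadConvexOn

theorem VarConv.proxReg {f : En n → EReal} {s : ℝ} {xb xbs : En n} (h : VarConv f s xb xbs) :
    ∃ ε > (0 : ℝ), ProxReg f xb xbs (max (-s) 0) ε := by
  obtain ⟨⟨a, ha⟩, hsub, U, V, fh, ρ, hUo, -, hxbU, hVo, -, hxbsV, -, hρ, hconv, hle, hgraph,
    heq⟩ := h
  have hconv : QuadConvexOn s U fh := hconv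
  obtain ⟨εU, hεU, hUb⟩ := isOpen_iff.mp hUo xb hxbU
  obtain ⟨εV, hεV, hVb⟩ := isOpen_iff.mp hVo xbs hxbsV
  have haρ : a < ρ := by rw [ha] at hρ; exact_mod_cast hρ
  set ε := min (min εU εV) (ρ - a)
  have hε : 0 < ε := lt_min (lt_min hεU hεV) (by linarith)
  have hU : ball xb ε ⊆ U :=
    (ball_subset_ball ((min_le_left _ _).trans (min_le_left _ _))).trans hUb
  have hV : ball xbs ε ⊆ V :=
    (ball_subset_ball ((min_le_left _ _).trans (min_le_right _ _))).trans hVb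
  refine ⟨ε, hε, ⟨a, ha⟩, hsub, le_max_right _ _, hε, ?_⟩
  rintro x' hx' p ⟨hpL, hplev, hp1, hp2⟩
  have hlev : f p.1 < ρ := hplev.trans_le <| by
    rw [ha, ← EReal.coe_add]
    exact_mod_cast (by linarith [min_le_right (min εU εV) (ρ - a)] : a + ε ≤ ρ)
  have hmem : p ∈ {p : En n × En n | p.2 ∈ LSubdiff f p.1 ∧ f p.1 < ρ} ∩ U ×ˢ V :=
    ⟨⟨hpL, hlev⟩, hU hp1, hV hp2⟩
  have hLfh : p.2 ∈ LSubdiff fh p.1 := (hgraph ▸ hmem).1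
  rw [heq p hmem] at hlev ⊢
  calc fh p.1 + ((⟪p.2, x' - p.1⟫ - max (-s) 0 / 2 * ‖x' - p.1‖ ^ 2 : ℝ) : EReal)
      ≤ fh p.1 + ((⟪p.2, x' - p.1⟫ + s / 2 * ‖x' - p.1‖ ^ 2 : ℝ) : EReal) := by
        gcongr
        nlinarith [le_max_left (-s) 0, sq_nonneg ‖x' - p.1‖]
    _ ≤ fh x' := hconv.add_le_of_mem_LSubdiff hUo (hU hp1) (hU hx') hlev.ne_top hLfh
    _ ≤ f x' := hle x' (hU hx')

lemma LowerSemicontinuous.exists_isMinOn_add_norm_sq {f : En n → EReal}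
    (hf : LowerSemicontinuous f) (z : En n) (lam : ℝ) {K : Set (En n)} (hK : IsCompact K)
    (hne : K.Nonempty) :
    ∃ y ∈ K, IsMinOn (fun y => f y + ((‖y - z‖ ^ 2 / (2 * lam) : ℝ) : EReal)) K y := by
  have hlsc : LowerSemicontinuous fun y => f y + ((‖y - z‖ ^ 2 / (2 * lam) : ℝ) : EReal) :=
    fun y => LowerSemicontinuousAt.add' (hf y) ((continuous_coe_real_ereal.comp
      (by fun_prop : Continuous fun y : En n => ‖y - z‖ ^ 2 / (2 * lam))).lowerSemicontinuous y)
      (EReal.continuousAt_add (Or.inr (EReal.coe_ne_bot _)) (Or.inr (EReal.coe_ne_top _)))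
  exact (hlsc.lowerSemicontinuousOn K).exists_isMinOn hne hK

lemma exists_prox_constants {r ε : ℝ} (hr : 0 ≤ r) (hε : 0 < ε) {M : ℝ} (hM : 0 ≤ M) :
    ∃ lam ε₁ : ℝ, 0 < lam ∧ lam ≤ 1 ∧ lam * r ≤ 1 / 2 ∧ 0 < ε₁ ∧ 32 * ε₁ ≤ ε ∧
      20 * ε₁ ≤ lam * ε ∧ (ε₁ + lam * (M + ε₁)) ^ 2 < 2 * lam * ε := by
  set lam := min (1 / (2 * r + 2)) (ε / (M + 2) ^ 2)
  have hlam : 0 < lam := lt_min (by positivity) (by positivity)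
  have hlam2 : lam * (2 * r + 2) ≤ 1 := (le_div_iff₀ (by positivity)).1 (min_le_left _ _)
  have hlamM : lam * (M + 2) ^ 2 ≤ ε := (le_div_iff₀ (by positivity)).1 (min_le_right _ _)
  set ε₁ := min lam (min (ε / 32) (lam * ε / 20))
  have hε₁ : ε₁ ≤ lam := min_le_left _ _
  have hε₁32 : ε₁ ≤ ε / 32 := (min_le_right _ _).trans (min_le_left _ _)
  have hε₁20 : ε₁ ≤ lam * ε / 20 := (min_le_right _ _).trans (min_le_right _ _)
  have hε₁0 : 0 < ε₁ := lt_min hlam (lt_min (by positivity) (by positivity))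
  refine ⟨lam, ε₁, hlam, by nlinarith, by nlinarith, hε₁0, by linarith, by linarith, ?_⟩
  have hbound : ε₁ + lam * (M + ε₁) ≤ lam * (M + 2) := by nlinarith
  calc (ε₁ + lam * (M + ε₁)) ^ 2 ≤ (lam * (M + 2)) ^ 2 := by gcongr
    _ = lam * (lam * (M + 2) ^ 2) := by ring
    _ < 2 * lam * ε := by nlinarith

def proxMinorant (f : En n → EReal) (r : ℝ) (p : En n × En n) (x : En n) : ℝ :=
  (f p.1).toReal + ⟪p.2, x - p.1⟫ - r / 2 * ‖x - p.1‖ ^ 2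

lemma continuous_proxMinorant (f : En n → EReal) (r : ℝ) (p : En n × En n) :
    Continuous (proxMinorant f r p) := by
  unfold proxMinorant
  fun_prop

lemma proxMinorant_convex_combination (f : En n → EReal) (r : ℝ) (p : En n × En n)
    (x y : En n) {a b : ℝ} (hab : a + b = 1) :
    proxMinorant f r p (a • x + b • y) =
      a * proxMinorant f r p x + b * proxMinorant f r p y + r / 2 * (a * b * ‖y - x‖ ^ 2) := by
  have hmix := convex_combination_norm_sq (x - p.1) (y - p.1) hab
  rw [sub_sub_sub_cancel_right] at hmix
  obtain rfl := eq_sub_of_add_eq' hab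
  have hsub : a • x + (1 - a) • y - p.1 = a • (x - p.1) + (1 - a) • (y - p.1) := by module
  simp only [proxMinorant]
  rw [hsub, inner_add_right, real_inner_smul_right, real_inner_smul_right]
  linear_combination r / 2 * hmix

def proxEnvelope (f : En n → EReal) (xb xbs : En n) (r ε : ℝ) (x : En n) : ℝ :=
  ⨆ p : GphT f xb xbs ε, proxMinorant f r p x

namespace ProxReg

variable {f : En n → EReal} {xb xbs : En n} {r ε : ℝ}

lemma mem_GphT (h : ProxReg f xb xbs r ε) : (xb, xbs) ∈ GphT f xb xbs ε := by
  obtain ⟨⟨a, ha⟩, hsub, -, hε, -⟩ := h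
  refine ⟨hsub, ?_, mem_ball_self hε, mem_ball_self hε⟩
  rw [ha, ← EReal.coe_add]
  exact_mod_cast lt_add_of_pos_right a hε

lemma ne_bot (h : ProxReg f xb xbs r ε) {y : En n} (hy : y ∈ ball xb ε) : f y ≠ ⊥ := by
  obtain ⟨⟨a, ha⟩, -⟩ := id h
  intro hbot
  have hlow := h.2.2.2.2 y hy _ h.mem_GphT
  rw [hbot, ha, ← EReal.coe_add, le_bot_iff] at hlow
  exact EReal.coe_ne_bot _ hlow

lemma coe_toReal (h : ProxReg f xb xbs r ε) {p : En n × En n} (hp : p ∈ GphT f xb xbs ε) :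
    ((f p.1).toReal : EReal) = f p.1 :=
  EReal.coe_toReal (ne_top_of_lt hp.2.1) (h.ne_bot hp.2.2.1)

lemma proxMinorant_le (h : ProxReg f xb xbs r ε) {p : En n × En n} (hp : p ∈ GphT f xb xbs ε)
    {y : En n} (hy : y ∈ ball xb ε) : (proxMinorant f r p y : EReal) ≤ f y := by
  have hineq := h.2.2.2.2 y hy p hp
  rwa [← h.coe_toReal hp, ← EReal.coe_add, ← add_sub_assoc] at hineq

lemma bddAbove_range_proxMinorant (h : ProxReg f xb xbs r ε) (x : En n) :
    BddAbove (range fun p : GphT f xb xbs ε => proxMinorant f r p x) := by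
  obtain ⟨⟨a, ha⟩, -, hr, hε, -⟩ := id h
  refine ⟨a + ε + (‖xbs‖ + ε) * (‖x - xb‖ + ε), ?_⟩
  rintro _ ⟨⟨p, hp⟩, rfl⟩
  have hval : (f p.1).toReal < a + ε := by
    have hlev := hp.2.1
    rwa [← h.coe_toReal hp, ha, ← EReal.coe_add, EReal.coe_lt_coe_iff] at hlev
  have hp2 : ‖p.2‖ ≤ ‖xbs‖ + ε :=
    (norm_le_norm_add_norm_sub' _ _).trans (by linarith [mem_ball_iff_norm.1 hp.2.2.2])
  have hp1 : ‖x - p.1‖ ≤ ‖x - xb‖ + ε :=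
    (norm_sub_le_norm_sub_add_norm_sub _ xb _).trans
      (by linarith [mem_ball_iff_norm'.1 hp.2.2.1])
  have hinner : ⟪p.2, x - p.1⟫ ≤ (‖xbs‖ + ε) * (‖x - xb‖ + ε) :=
    (real_inner_le_norm _ _).trans (mul_le_mul hp2 hp1 (norm_nonneg _) (by positivity))
  simp only [proxMinorant]
  nlinarith [sq_nonneg ‖x - p.1‖]

lemma proxMinorant_le_proxEnvelope (h : ProxReg f xb xbs r ε) {p : En n × En n}
    (hp : p ∈ GphT f xb xbs ε) (x : En n) :
    proxMinorant f r p x ≤ proxEnvelope f xb xbs r ε x :=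
  le_ciSup (h.bddAbove_range_proxMinorant x) (⟨p, hp⟩ : GphT f xb xbs ε)

lemma proxEnvelope_le (h : ProxReg f xb xbs r ε) {y : En n} (hy : y ∈ ball xb ε) :
    (proxEnvelope f xb xbs r ε y : EReal) ≤ f y := by
  have : Nonempty (GphT f xb xbs ε) := ⟨⟨_, h.mem_GphT⟩⟩
  rcases eq_or_ne (f y) ⊤ with htop | htop
  · simp [htop]
  rw [← EReal.coe_toReal htop (h.ne_bot hy), EReal.coe_le_coe_iff]
  refine ciSup_le fun p => EReal.coe_le_coe_iff.1 ?_
  rw [EReal.coe_toReal htop (h.ne_bot hy)]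
  exact h.proxMinorant_le p.2 hy

lemma proxEnvelope_eq (h : ProxReg f xb xbs r ε) {p : En n × En n} (hp : p ∈ GphT f xb xbs ε) :
    (proxEnvelope f xb xbs r ε p.1 : EReal) = f p.1 :=
  le_antisymm (h.proxEnvelope_le hp.2.2.1) <| by
    rw [← h.coe_toReal hp, EReal.coe_le_coe_iff]
    simpa [proxMinorant] using h.proxMinorant_le_proxEnvelope hp p.1

lemma lowerSemicontinuous_proxEnvelope (h : ProxReg f xb xbs r ε) :
    LowerSemicontinuous fun x => (proxEnvelope f xb xbs r ε x : EReal) :=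
  continuous_coe_real_ereal.comp_lowerSemicontinuous
    (lowerSemicontinuous_ciSup h.bddAbove_range_proxMinorant fun p =>
      (continuous_proxMinorant f r p).lowerSemicontinuous) EReal.coe_strictMono.monotone

lemma quadConvexOn_proxEnvelope (h : ProxReg f xb xbs r ε) :
    QuadConvexOn (-r) univ fun x => (proxEnvelope f xb xbs r ε x : EReal) := by
  have : Nonempty (GphT f xb xbs ε) := ⟨⟨_, h.mem_GphT⟩⟩
  intro x _ y _ a b ha hb hab
  have hreal : proxEnvelope f xb xbs r ε (a • x + b • y) ≤ a * proxEnvelope f xb xbs r ε x +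
      b * proxEnvelope f xb xbs r ε y + r / 2 * (a * b * ‖y - x‖ ^ 2) :=
    ciSup_le fun p => by
      rw [proxMinorant_convex_combination f r p x y hab]
      gcongr
      · exact h.proxMinorant_le_proxEnvelope p.2 x
      · exact h.proxMinorant_le_proxEnvelope p.2 y
  dsimp only
  rw [convex_combination_norm_sq x y hab]
  norm_cast
  linarith

lemma mem_FSubdiff_proxEnvelope (h : ProxReg f xb xbs r ε) {p : En n × En n}
    (hp : p ∈ GphT f xb xbs ε) :
    p.2 ∈ FSubdiff (fun x => (proxEnvelope f xb xbs r ε x : EReal)) p.1 :=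
  mem_FSubdiff_of_forall_ball_le (r := r) one_pos fun y _ => by
    rw [h.proxEnvelope_eq hp, ← h.coe_toReal hp, ← EReal.coe_add, EReal.coe_le_coe_iff]
    have hmin := h.proxMinorant_le_proxEnvelope hp y
    simp only [proxMinorant] at hmin
    linarith

lemma norm_sub_le_of_prox_le (h : ProxReg f xb xbs r ε) {y z : En n} {lam : ℝ}
    (hlam : 0 < lam) (hlamr : lam * r ≤ 1 / 2) (hy : y ∈ ball xb ε)
    (hcmp : f y + ((‖y - z‖ ^ 2 / (2 * lam) : ℝ) : EReal)
      ≤ f xb + ((‖xb - z‖ ^ 2 / (2 * lam) : ℝ) : EReal)) :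
    ‖y - xb‖ ≤ 4 * ‖z - xb - lam • xbs‖ := by
  obtain ⟨⟨a, ha⟩, -⟩ := id h
  have hlow := (add_le_add_left (h.2.2.2.2 y hy _ h.mem_GphT) _).trans hcmp
  rw [ha] at hlow
  norm_cast at hlow
  refine norm_le_four_mul_of_prox_le hlam hlamr ?_
  rw [sub_sub_sub_cancel_right, ← norm_neg (z - xb), neg_sub]
  linarith

lemma lt_of_prox_le (h : ProxReg f xb xbs r ε) {y z : En n} {lam : ℝ} (hlam : 0 < lam)
    (hz : ‖xb - z‖ ^ 2 < 2 * lam * ε)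
    (hcmp : f y + ((‖y - z‖ ^ 2 / (2 * lam) : ℝ) : EReal)
      ≤ f xb + ((‖xb - z‖ ^ 2 / (2 * lam) : ℝ) : EReal)) :
    f y < f xb + ε := by
  obtain ⟨⟨a, ha⟩, -⟩ := id h
  have hQ : ‖xb - z‖ ^ 2 / (2 * lam) < ε := by rw [div_lt_iff₀ (by positivity)]; linarith
  calc f y ≤ f y + ((‖y - z‖ ^ 2 / (2 * lam) : ℝ) : EReal) :=
        le_add_of_nonneg_right (by exact_mod_cast (by positivity))
    _ ≤ f xb + ((‖xb - z‖ ^ 2 / (2 * lam) : ℝ) : EReal) := hcmp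
    _ < f xb + ε := by rw [ha]; exact_mod_cast (by linarith)

lemma exists_prox_point (h : ProxReg f xb xbs r ε) (hf : LowerSemicontinuous f) {z : En n}
    {lam ε₁ : ℝ} (hlam : 0 < lam) (hlamr : lam * r ≤ 1 / 2) (h32 : 32 * ε₁ ≤ ε)
    (hz : ‖z - xb - lam • xbs‖ ≤ 2 * ε₁) :
    ∃ y, ‖y - xb‖ ≤ 8 * ε₁ ∧
      f y + ((‖y - z‖ ^ 2 / (2 * lam) : ℝ) : EReal)
        ≤ f xb + ((‖xb - z‖ ^ 2 / (2 * lam) : ℝ) : EReal) ∧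
      ∀ y' ∈ ball y (ε / 4), f y + ((‖y - z‖ ^ 2 / (2 * lam) : ℝ) : EReal)
        ≤ f y' + ((‖y' - z‖ ^ 2 / (2 * lam) : ℝ) : EReal) := by
  have hε := h.2.2.2.1
  obtain ⟨y, hyK, hmin⟩ := hf.exists_isMinOn_add_norm_sq z lam (isCompact_closedBall xb (ε / 2))
    ⟨xb, mem_closedBall_self (by linarith)⟩
  have hcmp := isMinOn_iff.1 hmin xb (mem_closedBall_self (by linarith))
  have hloc : ‖y - xb‖ ≤ 8 * ε₁ := (h.norm_sub_le_of_prox_le hlam hlamr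
    (closedBall_subset_ball (by linarith) hyK) hcmp).trans (by linarith)
  refine ⟨y, hloc, hcmp, fun y' hy' => isMinOn_iff.1 hmin y' ?_⟩
  rw [mem_closedBall_iff_norm]
  linarith [norm_sub_le_norm_sub_add_norm_sub y' y xb, mem_ball_iff_norm.1 hy']

lemma exists_mem_GphT_of_prox (h : ProxReg f xb xbs r ε) (hf : LowerSemicontinuous f)
    {lam ε₁ : ℝ} (hlam : 0 < lam) (hlam1 : lam ≤ 1) (hlamr : lam * r ≤ 1 / 2)
    (h32 : 32 * ε₁ ≤ ε) (h20 : 20 * ε₁ ≤ lam * ε)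
    (hquad : (ε₁ + lam * (‖xbs‖ + ε₁)) ^ 2 < 2 * lam * ε)
    {x v : En n} (hx : x ∈ ball xb ε₁) (hv : v ∈ ball xbs ε₁) :
    ∃ y w, (y, w) ∈ GphT f xb xbs ε ∧ x - y = lam • (w - v) := by
  have hε := h.2.2.2.1
  have hx' := mem_ball_iff_norm.1 hx
  have hv' := mem_ball_iff_norm.1 hv
  set z := x + lam • v
  have hz : ‖z - xb - lam • xbs‖ ≤ 2 * ε₁ := by
    rw [show z - xb - lam • xbs = (x - xb) + lam • (v - xbs) by module]
    refine (norm_add_le _ _).trans ?_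
    rw [norm_smul, Real.norm_of_nonneg hlam.le]
    nlinarith [mul_nonneg (sub_nonneg.2 hlam1) (norm_nonneg (v - xbs))]
  obtain ⟨y, hloc, hcmp, hmin⟩ := h.exists_prox_point hf hlam hlamr h32 hz
  set w := lam⁻¹ • (z - y)
  have hwF : w ∈ FSubdiff f y := inv_smul_sub_mem_FSubdiff_of_prox hlam (by linarith) hmin
  have hxy : x - y = lam • (w - v) := by
    simp only [w, z, smul_sub, smul_inv_smul₀ hlam.ne']
    abel
  have hyε : y ∈ ball xb ε := mem_ball_iff_norm.2 (by linarith)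
  refine ⟨y, w, ⟨FSubdiff_subset_LSubdiff _ _ hwF, h.lt_of_prox_le hlam ?_ hcmp, hyε, ?_⟩, hxy⟩
  · have hxbz : ‖xb - z‖ ≤ ε₁ + lam * (‖xbs‖ + ε₁) := by
      rw [show xb - z = -((x - xb) + lam • v) by simp only [z]; abel, norm_neg]
      refine (norm_add_le _ _).trans ?_
      rw [norm_smul, Real.norm_of_nonneg hlam.le]
      gcongr
      linarith [norm_le_norm_add_norm_sub' v xbs]
    exact lt_of_le_of_lt (pow_le_pow_left₀ (norm_nonneg _) hxbz 2) hquad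
  · have hwv : w - v = lam⁻¹ • (x - y) := by rw [hxy, inv_smul_smul₀ hlam.ne']
    have hxy' : ‖x - y‖ ≤ 9 * ε₁ := by
      linarith [norm_sub_le_norm_sub_add_norm_sub x xb y, norm_sub_rev xb y]
    rw [mem_ball_iff_norm]
    calc ‖w - xbs‖ ≤ ‖w - v‖ + ‖v - xbs‖ := norm_sub_le_norm_sub_add_norm_sub _ _ _
      _ ≤ lam⁻¹ * (9 * ε₁) + ε₁ := by
        rw [hwv, norm_smul, Real.norm_of_nonneg (by positivity)]
        gcongr
      _ < ε := by
        rw [← div_eq_inv_mul, div_add' _ _ _ hlam.ne', div_lt_iff₀ hlam]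
        nlinarith

lemma mem_LSubdiff_of_mem_LSubdiff_proxEnvelope (h : ProxReg f xb xbs r ε)
    (hf : LowerSemicontinuous f) {lam ε₁ : ℝ} (hlam : 0 < lam) (hlam1 : lam ≤ 1)
    (hlamr : lam * r ≤ 1 / 2) (h32 : 32 * ε₁ ≤ ε) (h20 : 20 * ε₁ ≤ lam * ε)
    (hquad : (ε₁ + lam * (‖xbs‖ + ε₁)) ^ 2 < 2 * lam * ε)
    {x v : En n} (hx : x ∈ ball xb ε₁) (hv : v ∈ ball xbs ε₁)
    (hxv : v ∈ LSubdiff (fun x => (proxEnvelope f xb xbs r ε x : EReal)) x) :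
    v ∈ LSubdiff f x ∧ f x < f xb + ε := by
  obtain ⟨y, w, hT, hxy⟩ :=
    h.exists_mem_GphT_of_prox hf hlam hlam1 hlamr h32 h20 hquad hx hv
  have hgrowth := h.quadConvexOn_proxEnvelope.add_le_of_mem_LSubdiff isOpen_univ
    (mem_univ x) (mem_univ y) (EReal.coe_ne_top _) hxv
  have hminor := h.proxMinorant_le_proxEnvelope hT x
  have hy : proxEnvelope f xb xbs r ε y = (f y).toReal := by
    exact_mod_cast (h.proxEnvelope_eq hT).trans (h.coe_toReal hT).symm
  norm_cast at hgrowth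
  have hwv : w = v := eq_of_inner_sub_le_of_sub_eq_smul (r := r) hlam (by linarith) hxy <| by
    simp only [proxMinorant] at hminor
    have hneg : ⟪v, y - x⟫ = -⟪v, x - y⟫ := by rw [← inner_neg_right, neg_sub]
    rw [norm_sub_rev y x] at hgrowth
    rw [inner_sub_left]
    linarith
  obtain rfl : y = x := by
    rw [hwv, sub_self, smul_zero, sub_eq_zero] at hxy
    exact hxy.symm
  exact ⟨hwv ▸ hT.1, hT.2.1⟩

theorem varConv (h : ProxReg f xb xbs r ε) (hf : LowerSemicontinuous f) :
    VarConv f (-r) xb xbs := by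
  obtain ⟨⟨a, ha⟩, hsub, hr, hε, -⟩ := id h
  obtain ⟨lam, ε₁, hlam, hlam1, hlamr, hε₁, h32, h20, hquad⟩ :=
    exists_prox_constants hr hε (norm_nonneg xbs)
  have hε₁ε : ε₁ ≤ ε := by linarith
  have hlev : f xb + ε = ((a + ε : ℝ) : EReal) := by rw [ha, EReal.coe_add]
  have hT : ∀ p ∈ {p : En n × En n | p.2 ∈ LSubdiff f p.1 ∧ f p.1 < ((a + ε : ℝ) : EReal)} ∩
      ball xb ε₁ ×ˢ ball xbs ε₁, p ∈ GphT f xb xbs ε :=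
    fun p ⟨⟨hL, hlt⟩, h1, h2⟩ =>
      ⟨hL, hlev ▸ hlt, ball_subset_ball hε₁ε h1, ball_subset_ball hε₁ε h2⟩
  refine ⟨⟨a, ha⟩, hsub, ball xb ε₁, ball xbs ε₁, fun x => (proxEnvelope f xb xbs r ε x : EReal),
    a + ε, isOpen_ball, convex_ball _ _, mem_ball_self hε₁, isOpen_ball, convex_ball _ _,
    mem_ball_self hε₁, h.lowerSemicontinuous_proxEnvelope, ?_,
    fun x _ y _ => h.quadConvexOn_proxEnvelope x trivial y trivial,
    fun x hx => h.proxEnvelope_le (ball_subset_ball hε₁ε hx), ?_,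
    fun p hp => (h.proxEnvelope_eq (hT p hp)).symm⟩
  · rw [ha]
    exact_mod_cast lt_add_of_pos_right a hε
  · ext p
    refine ⟨fun hp => ⟨FSubdiff_subset_LSubdiff _ _ (h.mem_FSubdiff_proxEnvelope (hT p hp)),
      hp.2⟩, fun ⟨hL, hx, hv⟩ => ?_⟩
    obtain ⟨hfL, hflt⟩ :=
      h.mem_LSubdiff_of_mem_LSubdiff_proxEnvelope hf hlam hlam1 hlamr h32 h20 hquad hx hv hL
    exact ⟨⟨hfL, hlev ▸ hflt⟩, hx, hv⟩

end ProxReg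

theorem stmt9 (f : En n → EReal) (xb xbs : En n) (hf : LowerSemicontinuous f) :
    (∀ s : ℝ, VarConv f s xb xbs →
      ∃ ε > (0:ℝ), ProxReg f xb xbs (max (-s) 0) ε) ∧
    (∀ r ε : ℝ, ProxReg f xb xbs r ε → VarConv f (-r) xb xbs) :=
  ⟨fun _ h => h.proxReg, fun _ _ h => h.varConv hf⟩
end
end

section
/- Let σ' > 0 and let P, W be symmetric n×n real matrices such that P² = P, W(I − P) = I − P, and W − σP is positive semidefinite for some σ > σ'. Set W̃ := W − σ'P. Then W̃ is positive definite (hence nonsingular) and P W̃⁻¹ = W̃⁻¹ P is positive semidefinite. -/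
open Matrix

variable {n : ℕ}

theorem stmt14 (σ σ' : ℝ) (hσ' : 0 < σ') (hσ : σ' < σ)
    (P W : Matrix (Fin n) (Fin n) ℝ) (hP : P.IsSymm) (hW : W.IsSymm)
    (hP2 : P * P = P) (hWP : W * (1 - P) = 1 - P)
    (hpsd : (W - σ • P).PosSemidef) :
    (W - σ' • P).PosDef ∧ IsUnit (W - σ' • P) ∧
      P * (W - σ' • P)⁻¹ = (W - σ' • P)⁻¹ * P ∧
      (P * (W - σ' • P)⁻¹).PosSemidef := by
  -- W and P commute
  have hWPeq : W * P = W - 1 + P := by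
    have := hWP
    rw [mul_sub, mul_one] at this
    linear_combination (norm := noncomm_ring) -this
  have hcomm : P * W = W * P := by
    have h2 : P * W = (W * P)ᵀ := by
      rw [Matrix.transpose_mul, hP.eq, hW.eq]
    rw [h2, hWPeq]
    rw [Matrix.transpose_add, Matrix.transpose_sub, Matrix.transpose_one, hP.eq, hW.eq]
  have hsymm : (W - σ' • P).IsHermitian := by
    have : (W - σ' • P).IsSymm := by
      unfold Matrix.IsSymm
      rw [Matrix.transpose_sub, Matrix.transpose_smul, hP.eq, hW.eq]
    exact this
  -- positive definiteness
  have hpd : (W - σ' • P).PosDef := by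
    refine Matrix.PosDef.of_dotProduct_mulVec_pos hsymm (fun x hx => ?_)
    have key : star x ⬝ᵥ (W - σ' • P) *ᵥ x
        = x ⬝ᵥ (W - σ • P) *ᵥ x + (σ - σ') * (x ⬝ᵥ P *ᵥ x) := by
      simp only [star_trivial, Matrix.sub_mulVec, Matrix.smul_mulVec,
        dotProduct_sub, dotProduct_smul, smul_eq_mul]
      ring
    have hPquad : x ⬝ᵥ P *ᵥ x = (P *ᵥ x) ⬝ᵥ (P *ᵥ x) := by
      conv_lhs => rw [← hP2]
      rw [← Matrix.mulVec_mulVec, dotProduct_mulVec, ← Matrix.vecMul_transpose, hP.eq]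
    have ha : 0 ≤ x ⬝ᵥ (W - σ • P) *ᵥ x := by
      simpa using hpsd.dotProduct_mulVec_nonneg x
    by_cases hPx : P *ᵥ x = 0
    · -- then (W - σ'P)x = Wx = x
      have h1 : (1 - P) *ᵥ x = x := by
        simp [Matrix.sub_mulVec, hPx]
      have hWx : W *ᵥ x = x := by
        have := congrArg (fun M => M *ᵥ x) hWP
        simpa [← Matrix.mulVec_mulVec, h1] using this
      have : star x ⬝ᵥ (W - σ' • P) *ᵥ x = x ⬝ᵥ x := by
        simp [Matrix.sub_mulVec, Matrix.smul_mulVec, hWx, hPx]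
      rw [this]
      have hxx : x ⬝ᵥ x ≠ 0 := fun h => hx (dotProduct_self_eq_zero.mp h)
      exact lt_of_le_of_ne (Finset.sum_nonneg fun i _ => mul_self_nonneg _) (Ne.symm hxx)
    · have hpos : 0 < (P *ᵥ x) ⬝ᵥ (P *ᵥ x) := by
        have hne : (P *ᵥ x) ⬝ᵥ (P *ᵥ x) ≠ 0 := fun h => hPx (dotProduct_self_eq_zero.mp h)
        exact lt_of_le_of_ne (Finset.sum_nonneg fun i _ => mul_self_nonneg _) (Ne.symm hne)
      rw [key, hPquad]
      have : 0 < (σ - σ') * ((P *ᵥ x) ⬝ᵥ (P *ᵥ x)) :=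
        mul_pos (by linarith) hpos
      linarith
  have hunit : IsUnit (W - σ' • P) := hpd.isUnit
  -- commutation with the inverse
  have hcomm2 : P * (W - σ' • P) = (W - σ' • P) * P := by
    simp only [sub_mul, mul_sub, Matrix.mul_smul, Matrix.smul_mul, hcomm, hP2]
  have hdet : IsUnit (W - σ' • P).det := (Matrix.isUnit_iff_isUnit_det _).mp hunit
  have hinvcomm : P * (W - σ' • P)⁻¹ = (W - σ' • P)⁻¹ * P := by
    have lhsE : (W - σ' • P)⁻¹ * (P * (W - σ' • P)) * (W - σ' • P)⁻¹
        = (W - σ' • P)⁻¹ * P := by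
      rw [mul_assoc, mul_assoc, Matrix.mul_nonsing_inv _ hdet, mul_one]
    have rhsE : (W - σ' • P)⁻¹ * ((W - σ' • P) * P) * (W - σ' • P)⁻¹
        = P * (W - σ' • P)⁻¹ := by
      rw [← mul_assoc, Matrix.nonsing_inv_mul _ hdet, one_mul]
    rw [← rhsE, ← hcomm2, lhsE]
  -- positive semidefiniteness of P * (W - σ'P)⁻¹
  have hinv : (W - σ' • P)⁻¹.PosDef := hpd.inv
  have hkey : P * (W - σ' • P)⁻¹ = P * (W - σ' • P)⁻¹ * Pᴴ := by
    have hPH : Pᴴ = P := by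
      rw [Matrix.conjTranspose_eq_transpose_of_trivial, hP.eq]
    rw [hPH, mul_assoc, ← hinvcomm, ← mul_assoc, hP2]
  refine ⟨hpd, hunit, hinvcomm, ?_⟩
  rw [hkey]
  exact hinv.posSemidef.mul_mul_conjTranspose_same P
end
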